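/- arXiv:2107.11289 — 5 statements merged into one kernel-verified Lean document; each statement's English description precedes it below -/
import Mathlib

section
/- Fix p ∈ (1,∞). Define α : ℝ × [0,∞) × [0,∞) → [0,∞] by α(j,r,s) = (max(j,0))^p / m(r,s)^{p-1} when m(r,s) > 0, α(j,r,s) = 0 if max(j,0) = 0 = m(r,s), and α(j,r,s) = ∞ if max(j,0) > 0 and m(r,s) = 0, where m : [0,∞)² → [0,∞) is concave and continuous. Then α is jointly convex in (j,r,s). -/
/-!
For `c > 0` the function `(a, c) ↦ a ^ p / c ^ (p - 1)` is the supremum over `l ≥ 0` of its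
tangent planes `p l^(p-1) a - (p-1) l^p c` along the rays through `(l, 1)`, and with the
conventions `0/0 = 0`, `a/0 = ∞` this persists at `c = 0`. Each plane is nondecreasing in `a` and
nonincreasing in `c`, so composing it with the convex `j ↦ max j 0` and the concave `m` gives a
convex function; `α` is a supremum of such functions, hence convex.
-/

open ENNReal

/-- The density function `α(j,r,s) = (j₊)^p / m(r,s)^{p-1}`, with the conventions
`0/0 = 0` and `a/0 = ∞` for `a > 0`, valued in the extended nonnegative reals. -/
noncomputable def alphaFn (p : ℝ) (m : ℝ → ℝ → ℝ) (j r s : ℝ) : ℝ≥0∞ :=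
  if 0 < m r s then ENNReal.ofReal (max j 0 ^ p / m r s ^ (p - 1))
  else if max j 0 = 0 then 0 else ⊤

namespace Real

variable {p u l x y a c : ℝ}

/-- The tangent line of `u ↦ u ^ p` at `l` lies below the graph (weighted AM-GM). -/
lemma mul_rpow_sub_one_le_rpow (hp : 1 ≤ p) (hu : 0 ≤ u) (hl : 0 ≤ l) :
    p * l ^ (p - 1) * u - (p - 1) * l ^ p ≤ u ^ p := by
  have hp₀ : 0 < p := by linarith
  have amgm : u * l ^ (p - 1) ≤ p⁻¹ * u ^ p + (1 - p⁻¹) * l ^ p := by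
    have := geom_mean_le_arith_mean2_weighted (inv_nonneg.2 hp₀.le)
      (sub_nonneg.2 (inv_le_one_of_one_le₀ hp)) (rpow_nonneg hu p) (rpow_nonneg hl p)
      (add_sub_cancel p⁻¹ 1)
    rwa [← rpow_mul hu, mul_inv_cancel₀ hp₀.ne', rpow_one, ← rpow_mul hl,
      show p * (1 - p⁻¹) = p - 1 by field_simp] at this
  calc p * l ^ (p - 1) * u - (p - 1) * l ^ p = p * (u * l ^ (p - 1)) - (p - 1) * l ^ p := by ring
    _ ≤ p * (p⁻¹ * u ^ p + (1 - p⁻¹) * l ^ p) - (p - 1) * l ^ p := by gcongr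
    _ = u ^ p := by field_simp; ring

lemma mul_rpow_sub_one_self (hp : 1 ≤ p) (hl : 0 ≤ l) :
    p * l ^ (p - 1) * l - (p - 1) * l ^ p = l ^ p := by
  rw [mul_assoc, ← rpow_add_one' hl (by linarith), sub_add_cancel]
  ring

lemma mul_div_rpow_eq_rpow_div_rpow_sub_one (hx : 0 ≤ x) (hy : 0 < y) :
    y * (x / y) ^ p = x ^ p / y ^ (p - 1) := by
  rw [div_rpow hx hy.le, rpow_sub hy, rpow_one]
  field_simp

lemma mul_rpow_sub_one_le_div_rpow (hp : 1 ≤ p) (hx : 0 ≤ x) (hy : 0 < y) (hl : 0 ≤ l) :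
    p * l ^ (p - 1) * x - (p - 1) * l ^ p * y ≤ x ^ p / y ^ (p - 1) := by
  rw [← mul_div_rpow_eq_rpow_div_rpow_sub_one hx hy]
  calc _ = y * (p * l ^ (p - 1) * (x / y) - (p - 1) * l ^ p) := by field_simp
    _ ≤ y * (x / y) ^ p :=
      mul_le_mul_of_nonneg_left (mul_rpow_sub_one_le_rpow hp (div_nonneg hx hy.le) hl) hy.le

open Filter in
lemma iSup_ofReal_tangent (hp : 1 < p) (ha : 0 ≤ a) (hc : 0 ≤ c) :
    ⨆ l : NNReal, ENNReal.ofReal (p * (l : ℝ) ^ (p - 1) * a - (p - 1) * (l : ℝ) ^ p * c) =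
      if 0 < c then ENNReal.ofReal (a ^ p / c ^ (p - 1)) else if a = 0 then 0 else ⊤ := by
  split_ifs with hc₀ ha₀
  · refine le_antisymm (iSup_le fun l => ofReal_le_ofReal ?_) ?_
    · exact mul_rpow_sub_one_le_div_rpow hp.le ha hc₀ l.2
    · have hac : 0 ≤ a / c := div_nonneg ha hc
      refine le_iSup_of_le (a / c).toNNReal (ofReal_le_ofReal (le_of_eq ?_))
      rw [coe_toNNReal _ hac]
      calc a ^ p / c ^ (p - 1) = c * (a / c) ^ p :=
          (mul_div_rpow_eq_rpow_div_rpow_sub_one ha hc₀).symm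
        _ = c * (p * (a / c) ^ (p - 1) * (a / c) - (p - 1) * (a / c) ^ p) := by
          rw [mul_rpow_sub_one_self hp.le hac]
        _ = _ := by field_simp
  · obtain rfl : c = 0 := le_antisymm (not_lt.1 hc₀) hc
    simp [ha₀]
  · obtain rfl : c = 0 := le_antisymm (not_lt.1 hc₀) hc
    have hpa : 0 < p * a := mul_pos (by linarith) (lt_of_le_of_ne ha (Ne.symm ha₀))
    have hunbdd : Tendsto (fun l : ℝ => p * l ^ (p - 1) * a) atTop atTop := by
      simpa only [mul_comm _ a, ← mul_assoc] using
        (tendsto_rpow_atTop (sub_pos.2 hp)).const_mul_atTop hpa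
    refine eq_top_of_forall_nnreal_le fun r => ?_
    obtain ⟨l, hl, hrl⟩ := ((eventually_ge_atTop 0).and (hunbdd.eventually_ge_atTop r)).exists
    refine le_iSup_of_le l.toNNReal ?_
    simpa [coe_toNNReal _ hl] using ofReal_le_ofReal hrl

end Real

lemma ENNReal.iSup_ofReal_le_add {ι : Sort*} {f g h : ι → ℝ} {s t : ℝ} (hs : 0 ≤ s)
    (ht : 0 ≤ t) (hf : ∀ i, f i ≤ s * g i + t * h i) :
    ⨆ i, ENNReal.ofReal (f i) ≤
      ENNReal.ofReal s * (⨆ i, ENNReal.ofReal (g i)) +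
        ENNReal.ofReal t * ⨆ i, ENNReal.ofReal (h i) :=
  iSup_le fun i => calc
    ENNReal.ofReal (f i) ≤ ENNReal.ofReal (s * g i) + ENNReal.ofReal (t * h i) :=
      (ofReal_le_ofReal (hf i)).trans ofReal_add_le
    _ ≤ _ := by
      rw [ofReal_mul hs, ofReal_mul ht]
      gcongr <;> exact le_iSup (fun i => ENNReal.ofReal _) i

lemma alphaFn_eq_iSup {p : ℝ} (hp : 1 < p) (m : ℝ → ℝ → ℝ) (j : ℝ) {r s : ℝ}
    (hm : 0 ≤ m r s) :
    alphaFn p m j r s = ⨆ l : NNReal,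
      ENNReal.ofReal (p * (l : ℝ) ^ (p - 1) * max j 0 - (p - 1) * (l : ℝ) ^ p * m r s) :=
  (Real.iSup_ofReal_tangent hp (le_max_right j 0) hm).symm

theorem alphaFn_jointly_convex_general
    (p : ℝ) (hp : 1 < p)
    (m : ℝ → ℝ → ℝ)
    (hconc : ConcaveOn ℝ (Set.Ici 0 ×ˢ Set.Ici 0) (fun z : ℝ × ℝ => m z.1 z.2))
    (hnonneg : ∀ r s : ℝ, 0 ≤ r → 0 ≤ s → 0 ≤ m r s) :
    ∀ τ ∈ Set.Icc (0:ℝ) 1, ∀ j₀ r₀ s₀ j₁ r₁ s₁ : ℝ,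
      0 ≤ r₀ → 0 ≤ s₀ → 0 ≤ r₁ → 0 ≤ s₁ →
      alphaFn p m ((1 - τ) * j₀ + τ * j₁) ((1 - τ) * r₀ + τ * r₁) ((1 - τ) * s₀ + τ * s₁)
        ≤ ENNReal.ofReal (1 - τ) * alphaFn p m j₀ r₀ s₀
          + ENNReal.ofReal τ * alphaFn p m j₁ r₁ s₁ := by
  rintro τ ⟨hτ₀, hτ₁⟩ j₀ r₀ s₀ j₁ r₁ s₁ hr₀ hs₀ hr₁ hs₁
  have hσ : 0 ≤ 1 - τ := sub_nonneg.2 hτ₁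
  have hj : max ((1 - τ) * j₀ + τ * j₁) 0 ≤ (1 - τ) * max j₀ 0 + τ * max j₁ 0 :=
    max_le (by gcongr <;> exact le_max_left _ _) (by positivity)
  have hm : (1 - τ) * m r₀ s₀ + τ * m r₁ s₁ ≤
      m ((1 - τ) * r₀ + τ * r₁) ((1 - τ) * s₀ + τ * s₁) := by
    simpa using
      hconc.2 (Set.mk_mem_prod hr₀ hs₀) (Set.mk_mem_prod hr₁ hs₁) hσ hτ₀ (by ring)
  rw [alphaFn_eq_iSup hp m _ (hnonneg _ _ hr₀ hs₀),
    alphaFn_eq_iSup hp m _ (hnonneg _ _ hr₁ hs₁),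
    alphaFn_eq_iSup hp m _ (hnonneg _ _ (by positivity) (by positivity))]
  refine ENNReal.iSup_ofReal_le_add hσ hτ₀ fun l => ?_
  have hj_coef : 0 ≤ p * (l : ℝ) ^ (p - 1) := by positivity
  have hm_coef : 0 ≤ (p - 1) * (l : ℝ) ^ p := mul_nonneg (by linarith) (by positivity)
  linarith [mul_le_mul_of_nonneg_left hj hj_coef, mul_le_mul_of_nonneg_left hm hm_coef]

/-- For `p ∈ (1,∞)` and a concave continuous mobility `m` on `[0,∞)²`,
the density function `α` is jointly convex in `(j,r,s)` on `ℝ × [0,∞) × [0,∞)`,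
with the convex combination inequality computed in the extended reals. -/
theorem alphaFn_jointly_convex
    (p : ℝ) (hp : 1 < p)
    (m : ℝ → ℝ → ℝ)
    (hconc : ConcaveOn ℝ (Set.Ici 0 ×ˢ Set.Ici 0) (fun z : ℝ × ℝ => m z.1 z.2))
    (hcont : ContinuousOn (fun z : ℝ × ℝ => m z.1 z.2) (Set.Ici 0 ×ˢ Set.Ici 0))
    (hnonneg : ∀ r s : ℝ, 0 ≤ r → 0 ≤ s → 0 ≤ m r s) :
    ∀ τ ∈ Set.Icc (0:ℝ) 1, ∀ j₀ r₀ s₀ j₁ r₁ s₁ : ℝ,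
      0 ≤ r₀ → 0 ≤ s₀ → 0 ≤ r₁ → 0 ≤ s₁ →
      alphaFn p m ((1 - τ) * j₀ + τ * j₁) ((1 - τ) * r₀ + τ * r₁) ((1 - τ) * s₀ + τ * s₁)
        ≤ ENNReal.ofReal (1 - τ) * alphaFn p m j₀ r₀ s₀
          + ENNReal.ofReal τ * alphaFn p m j₁ r₁ s₁ :=
  alphaFn_jointly_convex_general p hp m hconc hnonneg
end

section
/- Let μ be a finite positive measure on ℝ^d satisfying the joint moment bound sup_x ∫ (|x-y|^q ∨ |x-y|^{pq}) η(x,y) dμ(y) ≤ C_η, where η ≥ 0 is a symmetric weight and q = p/(p-1). Let ρ be a probability measure on ℝ^d and j a signed measure on G = {(x,y) : x ≠ y, η(x,y) > 0} such that for some constant A ≥ 0 and all nonnegative measurable Φ on G: ∬_G Φ η d|j| ≤ A^{1/p} (∬_G Φ^q η d(μ⊗μ + ρ⊗μ + μ⊗ρ))^{1/q}. Then ∬_G (|x-y| ∨ |x-y|^p) η(x,y) d|j|(x,y) ≤ A^{1/p} · (C_μ + 2)^{1/q} · C_η^{1/q} · 2^{1/q}, where C_μ bounds ∫(1+|x|^p)dμ.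 -/
/-!
Take `Φ(x, y) = |x - y| ∨ |x - y|^p` in the Hölder bound. Then `Φ^q η` is exactly the integrand of
the joint moment bound, so its integral against `ν ⊗ μ` is at most `C_η ν(ℝ^d)`; by symmetry of
`η` the same holds for `μ ⊗ ρ`, and `μ(ℝ^d) ≤ C_μ`, `ρ(ℝ^d) = 1`.
-/

open MeasureTheory ENNReal

section

variable {α β : Type*} [MeasurableSpace α] [MeasurableSpace β]

theorem lintegral_prod_le_mul_measure_univ {ν : Measure α} {μ : Measure β}
    {f : α × β → ℝ≥0∞} {C : ℝ≥0∞} (hf : ∀ x, ∫⁻ y, f (x, y) ∂μ ≤ C) :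
    ∫⁻ z, f z ∂ν.prod μ ≤ C * ν Set.univ :=
  calc ∫⁻ z, f z ∂ν.prod μ ≤ ∫⁻ x, ∫⁻ y, f (x, y) ∂μ ∂ν := lintegral_prod_le f
    _ ≤ ∫⁻ _, C ∂ν := lintegral_mono hf
    _ = C * ν Set.univ := lintegral_const C

theorem lintegral_symm_add_prod_le {μ ρ : Measure α} [SFinite μ] [IsProbabilityMeasure ρ]
    {f : α × α → ℝ≥0∞} {C : ℝ≥0∞} (hsymm : ∀ x y, f (x, y) = f (y, x))
    (hf : ∀ x, ∫⁻ y, f (x, y) ∂μ ≤ C) :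
    ∫⁻ z, f z ∂(μ.prod μ + ρ.prod μ + μ.prod ρ) ≤ C * (μ Set.univ + 2) := by
  have hswap : ∫⁻ z, f z ∂μ.prod ρ = ∫⁻ z, f z ∂ρ.prod μ := by
    rw [← lintegral_prod_swap]
    exact lintegral_congr fun z => hsymm z.2 z.1
  have hρ : ∫⁻ z, f z ∂ρ.prod μ ≤ C := by
    simpa using lintegral_prod_le_mul_measure_univ (ν := ρ) hf
  rw [lintegral_add_measure, lintegral_add_measure, hswap]
  calc _ ≤ C * μ Set.univ + C + C := by
        gcongr
        exact lintegral_prod_le_mul_measure_univ hf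
    _ = C * (μ Set.univ + 2) := by ring

theorem lintegral_symm_add_prod_le_ofReal {μ ρ : Measure α} [SFinite μ]
    [IsProbabilityMeasure ρ] {f : α × α → ℝ≥0∞} {Cη Cμ : ℝ}
    (hsymm : ∀ x y, f (x, y) = f (y, x)) (hf : ∀ x, ∫⁻ y, f (x, y) ∂μ ≤ ENNReal.ofReal Cη)
    (hμ : μ Set.univ ≤ ENNReal.ofReal Cμ) :
    ∫⁻ z, f z ∂(μ.prod μ + ρ.prod μ + μ.prod ρ)
      ≤ ENNReal.ofReal (Cμ + 2) * ENNReal.ofReal Cη * 2 := by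
  -- for `μ = 0` the constant `Cμ` may be negative, but then the left side vanishes
  rcases eq_or_ne μ 0 with rfl | hμ0
  · simp
  have hCμ : 0 ≤ Cμ := (ofReal_pos.1 (hμ.trans_lt' (Measure.measure_univ_pos.2 hμ0))).le
  calc _ ≤ ENNReal.ofReal Cη * (μ Set.univ + 2) := lintegral_symm_add_prod_le hsymm hf
    _ ≤ ENNReal.ofReal Cη * ((ENNReal.ofReal Cμ + 2) * 2) := by
      gcongr
      exact (add_le_add_left hμ 2).trans (le_mul_of_one_le_right' one_le_two)
    _ = ENNReal.ofReal (Cμ + 2) * ENNReal.ofReal Cη * 2 := by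
      rw [ofReal_add hCμ zero_le_two, ofReal_ofNat]
      ring

end

theorem ofReal_max_rpow_rpow_mul {a p q : ℝ} (b : ℝ) (ha : 0 ≤ a) (hq : 0 ≤ q) :
    ENNReal.ofReal (max a (a ^ p)) ^ q * ENNReal.ofReal b
      = ENNReal.ofReal (max (a ^ q) (a ^ (p * q)) * b) := by
  rw [ofReal_rpow_of_nonneg (le_max_of_le_left ha) hq,
    Real.rpow_max ha (Real.rpow_nonneg ha p) hq, ← Real.rpow_mul ha,
    ofReal_mul (le_max_of_le_left (Real.rpow_nonneg ha q))]

theorem flux_moment_bound_general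
    {d : ℕ} (p q Cη Cμ A : ℝ) (hp : 1 < p) (hq : q = p / (p - 1))
    (η : EuclideanSpace ℝ (Fin d) × EuclideanSpace ℝ (Fin d) → ℝ)
    (hηsymm : ∀ x y : EuclideanSpace ℝ (Fin d), η (x, y) = η (y, x))
    (G : Set (EuclideanSpace ℝ (Fin d) × EuclideanSpace ℝ (Fin d)))
    (μ ρ : Measure (EuclideanSpace ℝ (Fin d)))
    [IsFiniteMeasure μ] [IsProbabilityMeasure ρ]
    (hmom : ∀ x, ∫⁻ y, ENNReal.ofReal
        (max (‖x - y‖ ^ q) (‖x - y‖ ^ (p * q)) * η (x, y)) ∂μ ≤ ENNReal.ofReal Cη)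
    (hCμ : ∫⁻ x, ENNReal.ofReal (1 + ‖x‖ ^ p) ∂μ ≤ ENNReal.ofReal Cμ)
    (j : SignedMeasure (EuclideanSpace ℝ (Fin d) × EuclideanSpace ℝ (Fin d)))
    (hHolder : ∀ Φ : EuclideanSpace ℝ (Fin d) × EuclideanSpace ℝ (Fin d) → ℝ≥0∞,
      Measurable Φ →
      ∫⁻ z in G, Φ z * ENNReal.ofReal (η z) ∂j.totalVariation
        ≤ ENNReal.ofReal A ^ (1 / p) *
          (∫⁻ z in G, Φ z ^ q * ENNReal.ofReal (η z)
              ∂(μ.prod μ + ρ.prod μ + μ.prod ρ)) ^ (1 / q)) :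
    ∫⁻ z in G, ENNReal.ofReal (max ‖z.1 - z.2‖ (‖z.1 - z.2‖ ^ p) * η z)
        ∂j.totalVariation
      ≤ ENNReal.ofReal A ^ (1 / p) * ENNReal.ofReal (Cμ + 2) ^ (1 / q)
          * ENNReal.ofReal Cη ^ (1 / q) * (2 : ℝ≥0∞) ^ (1 / q) := by
  have hq0 : 0 < q := hq ▸ div_pos (by linarith) (by linarith)
  have hμ_univ : μ Set.univ ≤ ENNReal.ofReal Cμ := by
    rw [← lintegral_one]
    refine (lintegral_mono fun x => ?_).trans hCμ
    exact one_le_ofReal.2 (le_add_of_nonneg_right (by positivity))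
  set Φ : EuclideanSpace ℝ (Fin d) × EuclideanSpace ℝ (Fin d) → ℝ≥0∞ :=
    fun z => ENNReal.ofReal (max ‖z.1 - z.2‖ (‖z.1 - z.2‖ ^ p))
  have hI : ∫⁻ z in G, Φ z ^ q * ENNReal.ofReal (η z) ∂(μ.prod μ + ρ.prod μ + μ.prod ρ)
      ≤ ENNReal.ofReal (Cμ + 2) * ENNReal.ofReal Cη * 2 := by
    simp_rw [Φ, ofReal_max_rpow_rpow_mul _ (norm_nonneg _) hq0.le]
    exact (setLIntegral_le_lintegral _ _).trans <|
      lintegral_symm_add_prod_le_ofReal (fun x y => by rw [norm_sub_rev, hηsymm]) hmom hμ_univ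
  calc _ = ∫⁻ z in G, Φ z * ENNReal.ofReal (η z) ∂j.totalVariation :=
        lintegral_congr fun z => ofReal_mul (le_max_of_le_left (norm_nonneg _))
    _ ≤ ENNReal.ofReal A ^ (1 / p)
          * (ENNReal.ofReal (Cμ + 2) * ENNReal.ofReal Cη * 2) ^ (1 / q) :=
        (hHolder Φ (by fun_prop)).trans (by gcongr)
    _ = _ := by
        rw [mul_rpow_of_nonneg _ _ (by positivity), mul_rpow_of_nonneg _ _ (by positivity)]
        ring

/-- Under the joint moment bound (MB2) on `(μ, η)` and the individual
moment bound on `μ`, any flux `j` satisfying the Hölder-type bound against the action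
constant `A` obeys the moment estimate
`∬_G (|x-y| ∨ |x-y|^p) η d|j| ≤ A^{1/p} (C_μ+2)^{1/q} C_η^{1/q} 2^{1/q}`. -/
theorem flux_moment_bound
    {d : ℕ} (p q Cη Cμ A : ℝ) (hp : 1 < p) (hq : q = p / (p - 1)) (hA : 0 ≤ A)
    (η : EuclideanSpace ℝ (Fin d) × EuclideanSpace ℝ (Fin d) → ℝ)
    (hηnn : ∀ z, 0 ≤ η z)
    (hηsymm : ∀ x y : EuclideanSpace ℝ (Fin d), η (x, y) = η (y, x))
    (G : Set (EuclideanSpace ℝ (Fin d) × EuclideanSpace ℝ (Fin d)))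
    (hG : G = {z | z.1 ≠ z.2 ∧ 0 < η z})
    (μ ρ : Measure (EuclideanSpace ℝ (Fin d)))
    [IsFiniteMeasure μ] [IsProbabilityMeasure ρ]
    (hmom : ∀ x, ∫⁻ y, ENNReal.ofReal
        (max (‖x - y‖ ^ q) (‖x - y‖ ^ (p * q)) * η (x, y)) ∂μ ≤ ENNReal.ofReal Cη)
    (hCμ : ∫⁻ x, ENNReal.ofReal (1 + ‖x‖ ^ p) ∂μ ≤ ENNReal.ofReal Cμ)
    (j : SignedMeasure (EuclideanSpace ℝ (Fin d) × EuclideanSpace ℝ (Fin d)))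
    (hHolder : ∀ Φ : EuclideanSpace ℝ (Fin d) × EuclideanSpace ℝ (Fin d) → ℝ≥0∞,
      Measurable Φ →
      ∫⁻ z in G, Φ z * ENNReal.ofReal (η z) ∂j.totalVariation
        ≤ ENNReal.ofReal A ^ (1 / p) *
          (∫⁻ z in G, Φ z ^ q * ENNReal.ofReal (η z)
              ∂(μ.prod μ + ρ.prod μ + μ.prod ρ)) ^ (1 / q)) :
    ∫⁻ z in G, ENNReal.ofReal (max ‖z.1 - z.2‖ (‖z.1 - z.2‖ ^ p) * η z)
        ∂j.totalVariation
      ≤ ENNReal.ofReal A ^ (1 / p) * ENNReal.ofReal (Cμ + 2) ^ (1 / q)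
          * ENNReal.ofReal Cη ^ (1 / q) * (2 : ℝ≥0∞) ^ (1 / q) :=
  flux_moment_bound_general p q Cη Cμ A hp hq η hηsymm G μ ρ hmom hCμ j hHolder
end

section
/- With the setup of the previous velocity form: if l̃(v)[v̄] = D(v)^{1/p}·D(v̄)^{1/q} with D(v), D(v̄) ∈ (0,∞), then there exists λ > 0 such that v₊ = λ v̄₊ holds m₁dν-a.e. and v₋ = λ v̄₋ holds m₂dν-a.e. -/
open MeasureTheory

/-- Equality case of Young's inequality. -/
lemma young_eq_aux {p q a b : ℝ} (hpq : Real.HolderConjugate p q) (ha : 0 ≤ a) (hb : 0 ≤ b)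
    (h : a * b = a ^ p / p + b ^ q / q) : a ^ p = b ^ q := by
  rcases ha.eq_or_lt with rfl | ha'
  · have h0 : (0:ℝ) ^ p = 0 := Real.zero_rpow hpq.ne_zero
    rw [h0, zero_mul, zero_div, zero_add] at h
    have hq0 := hpq.symm.pos
    have : b ^ q = 0 := by field_simp at h; linarith
    rw [h0, this]
  · rcases hb.eq_or_lt with rfl | hb'
    · have h0 : (0:ℝ) ^ q = 0 := Real.zero_rpow hpq.symm.ne_zero
      rw [h0, mul_zero, zero_div, add_zero] at h
      have hp0 := hpq.pos
      have : a ^ p = 0 := by field_simp at h; linarith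
      rw [h0, this]
    · by_contra hne
      have hex : Real.exp (p * Real.log a) = a ^ p := by
        rw [Real.rpow_def_of_pos ha', mul_comm]
      have hey : Real.exp (q * Real.log b) = b ^ q := by
        rw [Real.rpow_def_of_pos hb', mul_comm]
      have hxy : p * Real.log a ≠ q * Real.log b := by
        intro hxy
        exact hne (by rw [← hex, ← hey, hxy])
      have hkey := strictConvexOn_exp.2 (Set.mem_univ (p * Real.log a))
        (Set.mem_univ (q * Real.log b)) hxy hpq.inv_pos hpq.symm.inv_pos hpq.inv_add_inv_eq_one
      rw [smul_eq_mul, smul_eq_mul, smul_eq_mul, smul_eq_mul, hex, hey] at hkey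
      have hax : p⁻¹ * (p * Real.log a) = Real.log a :=
        inv_mul_cancel_left₀ hpq.ne_zero _
      have hby : q⁻¹ * (q * Real.log b) = Real.log b :=
        inv_mul_cancel_left₀ hpq.symm.ne_zero _
      rw [hax, hby, Real.exp_add, Real.exp_log ha', Real.exp_log hb'] at hkey
      rw [div_eq_inv_mul, div_eq_inv_mul] at h
      linarith

lemma rpow_base_inj {x y c : ℝ} (hx : 0 ≤ x) (hy : 0 ≤ y) (hc : 0 < c)
    (h : x ^ c = y ^ c) : x = y := by
  rcases lt_trichotomy x y with h' | h' | h'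
  · exact absurd h (ne_of_lt (Real.rpow_lt_rpow hx h' hc))
  · exact h'
  · exact absurd h.symm (ne_of_lt (Real.rpow_lt_rpow hy h' hc))

lemma scalar_key {p q A B : ℝ} (hpq : Real.HolderConjugate p q) (hA : 0 < A) (hB : 0 < B)
    {a b : ℝ} (ha : 0 ≤ a) (hb : 0 ≤ b) :
    a ^ (q-1) * b / (A ^ (1/p) * B ^ (1/q)) ≤ a ^ q / (p * A) + b ^ q / (q * B) ∧
    (a ^ (q-1) * b / (A ^ (1/p) * B ^ (1/q)) = a ^ q / (p * A) + b ^ q / (q * B) →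
      a ^ q / A = b ^ q / B) := by
  have hApos : (0:ℝ) < A ^ (1/p) := Real.rpow_pos_of_pos hA _
  have hBpos : (0:ℝ) < B ^ (1/q) := Real.rpow_pos_of_pos hB _
  set s := a ^ (q-1) / A ^ (1/p) with hs
  set t := b / B ^ (1/q) with ht
  have hsnn : 0 ≤ s := div_nonneg (Real.rpow_nonneg ha _) hApos.le
  have htnn : 0 ≤ t := div_nonneg hb hBpos.le
  have hqp : (q - 1) * p = q := hpq.symm.sub_one_mul_conj
  have hsp : s ^ p = a ^ q / A := by
    rw [hs, Real.div_rpow (Real.rpow_nonneg ha _) hApos.le, ← Real.rpow_mul ha, hqp,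
      ← Real.rpow_mul hA.le, one_div, inv_mul_cancel₀ hpq.ne_zero, Real.rpow_one]
  have htq : t ^ q = b ^ q / B := by
    rw [ht, Real.div_rpow hb hBpos.le, ← Real.rpow_mul hB.le, one_div,
      inv_mul_cancel₀ hpq.symm.ne_zero, Real.rpow_one]
  have hst : s * t = a ^ (q-1) * b / (A ^ (1/p) * B ^ (1/q)) := div_mul_div_comm _ _ _ _
  have hrhs : s ^ p / p + t ^ q / q = a ^ q / (p * A) + b ^ q / (q * B) := by
    rw [hsp, htq]; ring
  have hyoung := Real.young_inequality_of_nonneg hsnn htnn hpq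
  constructor
  · rw [← hst, ← hrhs]; exact hyoung
  · intro hEq
    have : s * t = s ^ p / p + t ^ q / q := by rw [hst, hrhs]; exact hEq
    have := young_eq_aux hpq hsnn htnn this
    rw [hsp, htq] at this
    exact this

lemma term_key {p q A B m a b : ℝ} (hpq : Real.HolderConjugate p q) (hA : 0 < A) (hB : 0 < B)
    (hm : 0 ≤ m) (ha : 0 ≤ a) (hb : 0 ≤ b) :
    m * (a ^ (q-1) * b / (A ^ (1/p) * B ^ (1/q))) ≤ m * (a ^ q / (p * A) + b ^ q / (q * B)) ∧
    (m * (a ^ (q-1) * b / (A ^ (1/p) * B ^ (1/q))) = m * (a ^ q / (p * A) + b ^ q / (q * B)) →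
      m * a ^ q / A = m * b ^ q / B) := by
  obtain ⟨h1, h2⟩ := scalar_key hpq hA hB ha hb
  refine ⟨mul_le_mul_of_nonneg_left h1 hm, fun hEq => ?_⟩
  rcases hm.eq_or_lt with rfl | hm'
  · simp
  · have := h2 (mul_left_cancel₀ hm'.ne' hEq)
    rw [mul_div_assoc, mul_div_assoc, this]

lemma point_key {p q A B m₁ m₂ v vb : ℝ} (hpq : Real.HolderConjugate p q)
    (hA : 0 < A) (hB : 0 < B) (hm₁ : 0 ≤ m₁) (hm₂ : 0 ≤ m₂) :
    vb * (m₁ * max v 0 ^ (q-1) - m₂ * max (-v) 0 ^ (q-1)) / (A ^ (1/p) * B ^ (1/q))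
      ≤ (m₁ * max v 0 ^ q + m₂ * max (-v) 0 ^ q) / (p * A)
        + (m₁ * max vb 0 ^ q + m₂ * max (-vb) 0 ^ q) / (q * B) ∧
    (vb * (m₁ * max v 0 ^ (q-1) - m₂ * max (-v) 0 ^ (q-1)) / (A ^ (1/p) * B ^ (1/q))
      = (m₁ * max v 0 ^ q + m₂ * max (-v) 0 ^ q) / (p * A)
        + (m₁ * max vb 0 ^ q + m₂ * max (-vb) 0 ^ q) / (q * B) →
      m₁ * max v 0 ^ q / A = m₁ * max vb 0 ^ q / B
        ∧ m₂ * max (-v) 0 ^ q / A = m₂ * max (-vb) 0 ^ q / B) := by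
  have hCpos : (0:ℝ) < A ^ (1/p) * B ^ (1/q) :=
    mul_pos (Real.rpow_pos_of_pos hA _) (Real.rpow_pos_of_pos hB _)
  set a₁ := max v 0 with ha₁
  set a₂ := max (-v) 0 with ha₂
  set b₁ := max vb 0 with hb₁
  set b₂ := max (-vb) 0 with hb₂
  have ha₁nn : 0 ≤ a₁ := le_max_right _ _
  have ha₂nn : 0 ≤ a₂ := le_max_right _ _
  have hb₁nn : 0 ≤ b₁ := le_max_right _ _
  have hb₂nn : 0 ≤ b₂ := le_max_right _ _
  obtain ⟨k₁, k₁e⟩ := term_key hpq hA hB hm₁ ha₁nn hb₁nn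
  obtain ⟨k₂, k₂e⟩ := term_key hpq hA hB hm₂ ha₂nn hb₂nn
  -- pointwise numerator bound
  have h1 : vb * a₁ ^ (q-1) ≤ b₁ * a₁ ^ (q-1) :=
    mul_le_mul_of_nonneg_right (le_max_left _ _) (Real.rpow_nonneg ha₁nn _)
  have h2 : (-vb) * a₂ ^ (q-1) ≤ b₂ * a₂ ^ (q-1) :=
    mul_le_mul_of_nonneg_right (le_max_left _ _) (Real.rpow_nonneg ha₂nn _)
  have hT : vb * (m₁ * a₁ ^ (q-1) - m₂ * a₂ ^ (q-1))
      ≤ m₁ * (a₁ ^ (q-1) * b₁) + m₂ * (a₂ ^ (q-1) * b₂) := by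
    nlinarith [mul_le_mul_of_nonneg_left h1 hm₁, mul_le_mul_of_nonneg_left h2 hm₂]
  have hTdiv : vb * (m₁ * a₁ ^ (q-1) - m₂ * a₂ ^ (q-1)) / (A ^ (1/p) * B ^ (1/q))
      ≤ m₁ * (a₁ ^ (q-1) * b₁ / (A ^ (1/p) * B ^ (1/q)))
        + m₂ * (a₂ ^ (q-1) * b₂ / (A ^ (1/p) * B ^ (1/q))) := by
    rw [← mul_div_assoc, ← mul_div_assoc, ← add_div]
    gcongr
  have hsum : m₁ * (a₁ ^ q / (p * A) + b₁ ^ q / (q * B))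
      + m₂ * (a₂ ^ q / (p * A) + b₂ ^ q / (q * B))
      = (m₁ * a₁ ^ q + m₂ * a₂ ^ q) / (p * A) + (m₁ * b₁ ^ q + m₂ * b₂ ^ q) / (q * B) := by
    ring
  constructor
  · calc vb * (m₁ * a₁ ^ (q-1) - m₂ * a₂ ^ (q-1)) / (A ^ (1/p) * B ^ (1/q))
        ≤ m₁ * (a₁ ^ (q-1) * b₁ / (A ^ (1/p) * B ^ (1/q)))
          + m₂ * (a₂ ^ (q-1) * b₂ / (A ^ (1/p) * B ^ (1/q))) := hTdiv
      _ ≤ m₁ * (a₁ ^ q / (p * A) + b₁ ^ q / (q * B))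
          + m₂ * (a₂ ^ q / (p * A) + b₂ ^ q / (q * B)) := add_le_add k₁ k₂
      _ = _ := hsum
  · intro hEq
    rw [← hsum] at hEq
    have e₁ : m₁ * (a₁ ^ (q-1) * b₁ / (A ^ (1/p) * B ^ (1/q)))
        = m₁ * (a₁ ^ q / (p * A) + b₁ ^ q / (q * B)) := by linarith
    have e₂ : m₂ * (a₂ ^ (q-1) * b₂ / (A ^ (1/p) * B ^ (1/q)))
        = m₂ * (a₂ ^ q / (p * A) + b₂ ^ q / (q * B)) := by linarith
    exact ⟨k₁e e₁, k₂e e₂⟩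

/-- Equality case of the velocity-form Hölder inequality: if
`l̃(v)[v̄] = D(v)^{1/p} D(v̄)^{1/q}` with `D(v), D(v̄) ∈ (0,∞)`, then there is
`λ > 0` with `v₊ = λ v̄₊` holding `m₁dν`-a.e. and `v₋ = λ v̄₋` holding `m₂dν`-a.e. -/
theorem velocity_form_holder_equality
    {X : Type*} [MeasurableSpace X] (ν : Measure X)
    (p q : ℝ) (hp : 1 < p) (hq : q = p / (p - 1))
    (m₁ m₂ : X → ℝ) (hm₁nn : ∀ x, 0 ≤ m₁ x) (hm₂nn : ∀ x, 0 ≤ m₂ x)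
    (hm₁ : Measurable m₁) (hm₂ : Measurable m₂)
    (v vb : X → ℝ) (hv : Measurable v) (hvb : Measurable vb)
    (hDv : Integrable (fun x => m₁ x * max (v x) 0 ^ q + m₂ x * max (-v x) 0 ^ q) ν)
    (hDvb : Integrable (fun x => m₁ x * max (vb x) 0 ^ q + m₂ x * max (-vb x) 0 ^ q) ν)
    (hDvpos : 0 < ∫ x, m₁ x * max (v x) 0 ^ q + m₂ x * max (-v x) 0 ^ q ∂ν)
    (hDvbpos : 0 < ∫ x, m₁ x * max (vb x) 0 ^ q + m₂ x * max (-vb x) 0 ^ q ∂ν)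
    (heq : (∫ x, vb x * (m₁ x * max (v x) 0 ^ (q - 1)
              - m₂ x * max (-v x) 0 ^ (q - 1)) ∂ν)
        = (∫ x, m₁ x * max (v x) 0 ^ q + m₂ x * max (-v x) 0 ^ q ∂ν) ^ (1 / p)
          * (∫ x, m₁ x * max (vb x) 0 ^ q + m₂ x * max (-vb x) 0 ^ q ∂ν) ^ (1 / q)) :
    ∃ lam : ℝ, 0 < lam ∧
      (∀ᵐ x ∂ν, 0 < m₁ x → max (v x) 0 = lam * max (vb x) 0) ∧
      (∀ᵐ x ∂ν, 0 < m₂ x → max (-v x) 0 = lam * max (-vb x) 0) := by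
  have hpq : Real.HolderConjugate p q := (Real.holderConjugate_iff_eq_conjExponent hp).2 hq
  set G := fun x => m₁ x * max (v x) 0 ^ q + m₂ x * max (-v x) 0 ^ q with hGdef
  set F := fun x => m₁ x * max (vb x) 0 ^ q + m₂ x * max (-vb x) 0 ^ q with hFdef
  set g := fun x => vb x * (m₁ x * max (v x) 0 ^ (q - 1)
      - m₂ x * max (-v x) 0 ^ (q - 1)) with hgdef
  set A := ∫ x, G x ∂ν with hAdef
  set B := ∫ x, F x ∂ν with hBdef
  have hApos : 0 < A := hDvpos
  have hBpos : 0 < B := hDvbpos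
  have hCpos : (0:ℝ) < A ^ (1/p) * B ^ (1/q) :=
    mul_pos (Real.rpow_pos_of_pos hApos _) (Real.rpow_pos_of_pos hBpos _)
  by_cases hgi : Integrable g ν
  swap
  · rw [integral_undef hgi] at heq
    exact absurd heq.symm (ne_of_gt hCpos)
  have hφnn : ∀ x, (0:ℝ) ≤ G x / (p * A) + F x / (q * B)
      - g x / (A ^ (1/p) * B ^ (1/q)) := by
    intro x
    have := (point_key (v := v x) (vb := vb x) hpq hApos hBpos (hm₁nn x) (hm₂nn x)).1
    simp only [hGdef, hFdef, hgdef]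
    linarith
  have hφint : Integrable (fun x => G x / (p * A) + F x / (q * B)
      - g x / (A ^ (1/p) * B ^ (1/q))) ν :=
    ((hDv.div_const _).add (hDvb.div_const _)).sub (hgi.div_const _)
  have hi1 : ∫ x, G x / (p * A) ∂ν = 1 / p := by
    rw [integral_div, ← hAdef, mul_comm, ← div_div, div_self hApos.ne']
  have hi2 : ∫ x, F x / (q * B) ∂ν = 1 / q := by
    rw [integral_div, ← hBdef, mul_comm, ← div_div, div_self hBpos.ne']
  have hi3 : ∫ x, g x / (A ^ (1/p) * B ^ (1/q)) ∂ν = 1 := by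
    rw [integral_div, heq, div_self hCpos.ne']
  have hφ0 : ∫ x, (G x / (p * A) + F x / (q * B)
      - g x / (A ^ (1/p) * B ^ (1/q))) ∂ν = 0 := by
    have hsum : Integrable (fun x => G x / (p * A) + F x / (q * B)) ν :=
      (hDv.div_const _).add (hDvb.div_const _)
    have hgdiv : Integrable (fun x => g x / (A ^ (1/p) * B ^ (1/q))) ν := hgi.div_const _
    rw [integral_sub hsum hgdiv, integral_add (hDv.div_const _) (hDvb.div_const _),
      hi1, hi2, hi3]
    have := hpq.inv_add_inv_eq_one
    rw [one_div, one_div]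
    linarith
  have hae := (integral_eq_zero_iff_of_nonneg hφnn hφint).1 hφ0
  have hlam : (0:ℝ) < (A / B) ^ (1/q) :=
    Real.rpow_pos_of_pos (div_pos hApos hBpos) _
  have hlamq : ((A / B) ^ (1/q)) ^ q = A / B := by
    rw [← Real.rpow_mul (div_nonneg hApos.le hBpos.le), one_div,
      inv_mul_cancel₀ hpq.symm.ne_zero, Real.rpow_one]
  refine ⟨(A / B) ^ (1/q), hlam, ?_, ?_⟩
  · filter_upwards [hae] with x hx hm
    simp only [Pi.zero_apply, hGdef, hFdef, hgdef] at hx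
    have hEq : vb x * (m₁ x * max (v x) 0 ^ (q - 1) - m₂ x * max (-v x) 0 ^ (q - 1))
        / (A ^ (1/p) * B ^ (1/q))
        = (m₁ x * max (v x) 0 ^ q + m₂ x * max (-v x) 0 ^ q) / (p * A)
          + (m₁ x * max (vb x) 0 ^ q + m₂ x * max (-vb x) 0 ^ q) / (q * B) := by
      linarith
    have hkey := ((point_key (v := v x) (vb := vb x) hpq hApos hBpos
      (hm₁nn x) (hm₂nn x)).2 hEq).1
    rw [mul_div_assoc, mul_div_assoc] at hkey
    have h1 := mul_left_cancel₀ hm.ne' hkey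
    rw [div_eq_div_iff hApos.ne' hBpos.ne'] at h1
    have h2 : max (v x) 0 ^ q = ((A / B) ^ (1/q) * max (vb x) 0) ^ q := by
      rw [Real.mul_rpow hlam.le (le_max_right _ _), hlamq]
      field_simp
      linarith
    exact rpow_base_inj (le_max_right _ _) (mul_nonneg hlam.le (le_max_right _ _))
      hpq.symm.pos h2
  · filter_upwards [hae] with x hx hm
    simp only [Pi.zero_apply, hGdef, hFdef, hgdef] at hx
    have hEq : vb x * (m₁ x * max (v x) 0 ^ (q - 1) - m₂ x * max (-v x) 0 ^ (q - 1))
        / (A ^ (1/p) * B ^ (1/q))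
        = (m₁ x * max (v x) 0 ^ q + m₂ x * max (-v x) 0 ^ q) / (p * A)
          + (m₁ x * max (vb x) 0 ^ q + m₂ x * max (-vb x) 0 ^ q) / (q * B) := by
      linarith
    have hkey := ((point_key (v := v x) (vb := vb x) hpq hApos hBpos
      (hm₁nn x) (hm₂nn x)).2 hEq).2
    rw [mul_div_assoc, mul_div_assoc] at hkey
    have h1 := mul_left_cancel₀ hm.ne' hkey
    rw [div_eq_div_iff hApos.ne' hBpos.ne'] at h1
    have h2 : max (-v x) 0 ^ q = ((A / B) ^ (1/q) * max (-vb x) 0) ^ q := by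
      rw [Real.mul_rpow hlam.le (le_max_right _ _), hlamq]
      field_simp
      linarith
    exact rpow_base_inj (le_max_right _ _) (mul_nonneg hlam.le (le_max_right _ _))
      hpq.symm.pos h2
end

section
/- Let p ∈ (1,∞), and let ψ_R(x) := φ_R(x)^p (1+|x|)^p, where φ_R ∈ C_c^∞(ℝ^d;[0,1]) satisfies φ_R ≡ 1 on B_R(0), supp φ_R ⊆ B_{2R}(0), and |∇φ_R| ≤ 2/R with R ≥ 2. Then there exists a constant C > 0, independent of R, such that for all x, y ∈ ℝ^d: |ψ_R(y) − ψ_R(x)|^q ≤ C·(1+|x|^p)·(|x−y|^q ∨ |x−y|^{pq}), where q = p/(p-1). -/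
open Real

/-- MVT-type bound: `b^p - a^p ≤ p * b^(p-1) * (b-a)` for `0 ≤ a ≤ b`, `1 < p`. -/
lemma aux_rpow_sub_rpow_le (p : ℝ) (hp : 1 < p) {a b : ℝ} (ha : 0 ≤ a) (hab : a ≤ b) :
    b ^ p - a ^ p ≤ p * b ^ (p - 1) * (b - a) := by
  have hb : 0 ≤ b := ha.trans hab
  have hmvt := Convex.norm_image_sub_le_of_norm_hasDerivWithin_le
    (f := fun z : ℝ => z ^ p) (f' := fun z : ℝ => p * z ^ (p - 1)) (s := Set.Icc 0 b)
    (C := p * b ^ (p - 1)) (x := a) (y := b)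
    (fun z _ => (Real.hasDerivAt_rpow_const (Or.inr hp.le)).hasDerivWithinAt)
    (fun z hz => by
      rw [Real.norm_eq_abs, abs_of_nonneg (mul_nonneg (by linarith) (Real.rpow_nonneg hz.1 _))]
      have : z ^ (p-1) ≤ b ^ (p-1) := Real.rpow_le_rpow hz.1 hz.2 (by linarith)
      nlinarith [hp])
    (convex_Icc 0 b) ⟨ha, hab⟩ ⟨hb, le_refl b⟩
  rw [Real.norm_eq_abs, Real.norm_eq_abs] at hmvt
  calc b ^ p - a ^ p ≤ |b ^ p - a ^ p| := le_abs_self _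
    _ ≤ p * b ^ (p-1) * |b - a| := hmvt
    _ = p * b ^ (p-1) * (b - a) := by rw [abs_of_nonneg (by linarith)]

/-- `(a+b)^p ≤ 2^p (a^p + b^p)` for nonneg `a,b` and `p ≥ 0`. -/
lemma aux_add_rpow (p : ℝ) (hp : 0 ≤ p) {a b : ℝ} (ha : 0 ≤ a) (hb : 0 ≤ b) :
    (a + b) ^ p ≤ 2 ^ p * (a ^ p + b ^ p) := by
  have h1 : a + b ≤ 2 * max a b := by rcases le_total a b with h | h <;>
    simp [max_eq_right, max_eq_left, h] <;> linarith
  have h2 : (a + b) ^ p ≤ (2 * max a b) ^ p :=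
    Real.rpow_le_rpow (by linarith) h1 hp
  have h3 : (2 * max a b) ^ p = 2 ^ p * (max a b) ^ p :=
    Real.mul_rpow (by norm_num) (le_max_of_le_left ha)
  have h4 : (max a b) ^ p ≤ a ^ p + b ^ p := by
    rcases max_cases a b with ⟨hm, _⟩ | ⟨hm, _⟩ <;> rw [hm]
    · nlinarith [Real.rpow_nonneg hb p]
    · nlinarith [Real.rpow_nonneg ha p]
  calc (a + b) ^ p ≤ 2 ^ p * (max a b) ^ p := by rw [← h3]; exact h2
    _ ≤ 2 ^ p * (a ^ p + b ^ p) := by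
        have : (0:ℝ) ≤ (2:ℝ) ^ p := Real.rpow_nonneg (by norm_num) p
        nlinarith

set_option maxHeartbeats 1000000 in
/-- Pointwise estimate on the truncated weight `ψ_R(x) = φ_R(x)^p (1+|x|)^p`:
there exists `C > 0` independent of `R ≥ 2` such that for any smooth cut-off `φ_R` with
values in `[0,1]`, `φ_R ≡ 1` on `B_R(0)`, support in `B_{2R}(0)` and `|∇φ_R| ≤ 2/R`,
one has `|ψ_R(y) − ψ_R(x)|^q ≤ C (1+|x|^p)(|x−y|^q ∨ |x−y|^{pq})`. -/
theorem cutoff_weight_estimate {d : ℕ} (p q : ℝ) (hp : 1 < p) (hq : q = p / (p - 1)) :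
    ∃ C : ℝ, 0 < C ∧ ∀ R : ℝ, 2 ≤ R →
      ∀ φ : EuclideanSpace ℝ (Fin d) → ℝ,
        ContDiff ℝ (⊤ : ℕ∞) φ → HasCompactSupport φ →
        (∀ x, φ x ∈ Set.Icc (0 : ℝ) 1) →
        (∀ x ∈ Metric.ball (0 : EuclideanSpace ℝ (Fin d)) R, φ x = 1) →
        Function.support φ ⊆ Metric.ball (0 : EuclideanSpace ℝ (Fin d)) (2 * R) →
        (∀ x, ‖fderiv ℝ φ x‖ ≤ 2 / R) →
        ∀ x y : EuclideanSpace ℝ (Fin d),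
          |φ y ^ p * (1 + ‖y‖) ^ p - φ x ^ p * (1 + ‖x‖) ^ p| ^ q
            ≤ C * (1 + ‖x‖ ^ p) * max (‖x - y‖ ^ q) (‖x - y‖ ^ (p * q)) := by
  have hp0 : (0:ℝ) < p := by linarith
  have hp1 : (0:ℝ) < p - 1 := by linarith
  have hq0 : 0 < q := by rw [hq]; positivity
  have hpq : (p - 1) * q = p := by rw [hq]; field_simp
  have hpqsum : p + q = p * q := by rw [hq]; field_simp; ring
  refine ⟨p ^ q * 2 ^ p * (2 ^ p * 7 ^ q + 7 ^ (p * q)), by positivity, ?_⟩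
  intro R hR φ hsm _hcs hrange _hone hsupp hgrad x y
  have hR0 : (0:ℝ) < R := by linarith
  -- φ is (2/R)-Lipschitz
  have hlipφ : ∀ a b : EuclideanSpace ℝ (Fin d), |φ b - φ a| ≤ 2 / R * ‖b - a‖ := by
    intro a b
    have := Convex.norm_image_sub_le_of_norm_fderiv_le (f := φ) (s := Set.univ) (x := a) (y := b)
      (fun z _ => (hsm.differentiable (by simp)).differentiableAt)
      (fun z _ => hgrad z) convex_univ trivial trivial
    simpa using this
  -- key bound near the boundary of the support
  have hkey : ∀ z : EuclideanSpace ℝ (Fin d), ‖z‖ < 2 * R →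
      φ z * (1 + ‖z‖) ≤ 5 * (2 * R - ‖z‖) := by
    intro z hz
    rcases eq_or_ne z 0 with rfl | hz0
    · have h1 := (hrange 0).2
      simp only [norm_zero, sub_zero]
      nlinarith [(hrange 0).1]
    · set w : EuclideanSpace ℝ (Fin d) := (2 * R / ‖z‖) • z with hw
      have hznorm : (0:ℝ) < ‖z‖ := norm_pos_iff.mpr hz0
      have hwnorm : ‖w‖ = 2 * R := by
        rw [hw, norm_smul, Real.norm_eq_abs, abs_of_nonneg (by positivity)]
        field_simp
      have hφw : φ w = 0 := by
        by_contra h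
        have := hsupp (Function.mem_support.mpr h)
        rw [Metric.mem_ball, dist_zero_right, hwnorm] at this
        exact lt_irrefl _ this
      have hdist : ‖z - w‖ = 2 * R - ‖z‖ := by
        have : z - w = (1 - 2 * R / ‖z‖) • z := by
          rw [hw, sub_smul, one_smul]
        rw [this, norm_smul, Real.norm_eq_abs]
        have h1 : 1 - 2 * R / ‖z‖ ≤ 0 := by
          rw [sub_nonpos, le_div_iff₀ hznorm]; linarith
        rw [abs_of_nonpos h1]
        field_simp; ring
      have hφz : φ z ≤ 2 / R * (2 * R - ‖z‖) := by
        have := hlipφ w z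
        rw [hφw, sub_zero, hdist] at this
        calc φ z ≤ |φ z| := le_abs_self _
          _ ≤ 2 / R * (2 * R - ‖z‖) := this
      have hφz0 : 0 ≤ φ z := (hrange z).1
      have h1 : φ z * (1 + ‖z‖) ≤ 2 / R * (2 * R - ‖z‖) * (1 + 2 * R) := by
        have hA : 0 ≤ 1 + ‖z‖ := by positivity
        have hB : 1 + ‖z‖ ≤ 1 + 2 * R := by linarith
        nlinarith [hφz, hφz0]
      have h2 : 2 / R * (1 + 2 * R) ≤ 5 := by
        rw [div_mul_eq_mul_div, div_le_iff₀ hR0]; nlinarith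
      nlinarith [h1, h2, hz]
  -- g is 7-Lipschitz
  set g : EuclideanSpace ℝ (Fin d) → ℝ := fun z => φ z * (1 + ‖z‖) with hgdef
  have hg0 : ∀ z, 0 ≤ g z := fun z => mul_nonneg ((hrange z).1) (by positivity)
  have hlip1 : ∀ a b : EuclideanSpace ℝ (Fin d), ‖b‖ ≤ ‖a‖ → |g b - g a| ≤ 7 * ‖b - a‖ := by
    intro a b hba
    rcases lt_or_ge ‖a‖ (2 * R) with h2 | h2
    · -- both inside the ball of radius 2R
      have hbb : ‖b‖ < 2 * R := lt_of_le_of_lt hba h2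
      have hdecomp : g b - g a = (φ b - φ a) * (1 + ‖b‖) + φ a * (‖b‖ - ‖a‖) := by
        simp only [hgdef]; ring
      have h1 : |(φ b - φ a) * (1 + ‖b‖)| ≤ 2 / R * ‖b - a‖ * (1 + 2 * R) := by
        rw [abs_mul, abs_of_nonneg (by positivity : (0:ℝ) ≤ 1 + ‖b‖)]
        have := hlipφ a b
        have hbn : 1 + ‖b‖ ≤ 1 + 2 * R := by linarith
        nlinarith [abs_nonneg (φ b - φ a), norm_nonneg (b - a), hR0]
      have h1' : 2 / R * ‖b - a‖ * (1 + 2 * R) ≤ 6 * ‖b - a‖ := by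
        have : 2 / R * (1 + 2 * R) ≤ 6 := by
          rw [div_mul_eq_mul_div, div_le_iff₀ hR0]; nlinarith
        nlinarith [norm_nonneg (b - a)]
      have h3 : |φ a * (‖b‖ - ‖a‖)| ≤ ‖b - a‖ := by
        rw [abs_mul, abs_of_nonneg (hrange a).1]
        have h4 : |‖b‖ - ‖a‖| ≤ ‖b - a‖ := abs_norm_sub_norm_le b a
        nlinarith [(hrange a).1, (hrange a).2, abs_nonneg (‖b‖ - ‖a‖)]
      calc |g b - g a| ≤ |(φ b - φ a) * (1 + ‖b‖)| + |φ a * (‖b‖ - ‖a‖)| := by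
            rw [hdecomp]; exact abs_add_le _ _
        _ ≤ 6 * ‖b - a‖ + ‖b - a‖ := add_le_add (h1.trans h1') h3
        _ = 7 * ‖b - a‖ := by ring
    · -- a is outside the ball
      have hφa : φ a = 0 := by
        by_contra h
        have := hsupp (Function.mem_support.mpr h)
        rw [Metric.mem_ball, dist_zero_right] at this
        linarith
      have hga : g a = 0 := by simp [hgdef, hφa]
      rw [hga, sub_zero, abs_of_nonneg (hg0 b)]
      rcases lt_or_ge ‖b‖ (2 * R) with hb2 | hb2
      · have h5 := hkey b hb2
        have h6 : 2 * R - ‖b‖ ≤ ‖a‖ - ‖b‖ := by linarith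
        have h7 : ‖a‖ - ‖b‖ ≤ ‖b - a‖ := by
          have := abs_norm_sub_norm_le a b
          rw [norm_sub_rev]
          calc ‖a‖ - ‖b‖ ≤ |‖a‖ - ‖b‖| := le_abs_self _
            _ ≤ ‖a - b‖ := this
        calc g b ≤ 5 * (2 * R - ‖b‖) := h5
          _ ≤ 5 * ‖b - a‖ := by nlinarith
          _ ≤ 7 * ‖b - a‖ := by nlinarith [norm_nonneg (b - a)]
      · have hφb : φ b = 0 := by
          by_contra h
          have := hsupp (Function.mem_support.mpr h)
          rw [Metric.mem_ball, dist_zero_right] at this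
          linarith
        simp only [hgdef, hφb, zero_mul]
        positivity
  have hlipg : ∀ a b : EuclideanSpace ℝ (Fin d), |g b - g a| ≤ 7 * ‖b - a‖ := by
    intro a b
    rcases le_total ‖b‖ ‖a‖ with h | h
    · exact hlip1 a b h
    · have := hlip1 b a h
      rw [abs_sub_comm, norm_sub_rev]; exact this
  -- main estimate
  set ζ := g x with hζ
  set ξ := g y with hξ
  have hζ0 : 0 ≤ ζ := hg0 x
  have hξ0 : 0 ≤ ξ := hg0 y
  set D := |ξ - ζ| with hD
  have hD0 : 0 ≤ D := abs_nonneg _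
  set t := ‖x - y‖ with ht
  have ht0 : 0 ≤ t := norm_nonneg _
  have hDt : D ≤ 7 * t := by
    have := hlipg x y
    rwa [norm_sub_rev y x] at this
  -- rewrite ψ as g^p
  have hrw : ∀ z : EuclideanSpace ℝ (Fin d), φ z ^ p * (1 + ‖z‖) ^ p = (g z) ^ p := by
    intro z
    rw [hgdef, Real.mul_rpow (hrange z).1 (by positivity)]
  rw [hrw, hrw]
  set M := max ζ ξ with hM
  set m := min ζ ξ with hm
  have hM0 : 0 ≤ M := le_max_of_le_left hζ0
  have hm0 : 0 ≤ m := le_min hζ0 hξ0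
  have hmM : m ≤ M := min_le_max
  have habs : |ξ ^ p - ζ ^ p| = M ^ p - m ^ p := by
    rcases le_total ζ ξ with h | h
    · rw [hM, hm, max_eq_right h, min_eq_left h,
        abs_of_nonneg (by nlinarith [Real.rpow_le_rpow hζ0 h hp0.le] : (0:ℝ) ≤ ξ ^ p - ζ ^ p)]
    · rw [hM, hm, max_eq_left h, min_eq_right h,
        abs_of_nonpos (by nlinarith [Real.rpow_le_rpow hξ0 h hp0.le] : ξ ^ p - ζ ^ p ≤ 0)]
      ring
  have hMm : M - m = D := by
    rcases le_total ζ ξ with h | h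
    · rw [hM, hm, max_eq_right h, min_eq_left h, hD, abs_of_nonneg (by linarith)]
    · rw [hM, hm, max_eq_left h, min_eq_right h, hD, abs_of_nonpos (by linarith)]; ring
  have h1 : |ξ ^ p - ζ ^ p| ≤ p * M ^ (p - 1) * D := by
    rw [habs, ← hMm]
    exact aux_rpow_sub_rpow_le p hp hm0 hmM
  have h2 : |ξ ^ p - ζ ^ p| ^ q ≤ (p * M ^ (p - 1) * D) ^ q :=
    Real.rpow_le_rpow (abs_nonneg _) h1 hq0.le
  have h3 : (p * M ^ (p - 1) * D) ^ q = p ^ q * M ^ p * D ^ q := by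
    rw [Real.mul_rpow (by positivity) hD0,
      Real.mul_rpow hp0.le (Real.rpow_nonneg hM0 _),
      ← Real.rpow_mul hM0, hpq]
  have hMle : M ≤ ζ + D := by
    refine max_le (by linarith) ?_
    have := le_abs_self (ξ - ζ)
    rw [← hD] at this
    linarith
  have hMp : M ^ p ≤ 2 ^ p * (ζ ^ p + D ^ p) :=
    (Real.rpow_le_rpow hM0 hMle hp0.le).trans (aux_add_rpow p hp0.le hζ0 hD0)
  have hζle : ζ ≤ 1 + ‖x‖ := by
    have := (hrange x).2
    have h0 : (0:ℝ) ≤ 1 + ‖x‖ := by positivity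
    calc ζ = φ x * (1 + ‖x‖) := rfl
      _ ≤ 1 * (1 + ‖x‖) := by nlinarith [(hrange x).1]
      _ = 1 + ‖x‖ := one_mul _
  have hζp : ζ ^ p ≤ 2 ^ p * (1 + ‖x‖ ^ p) := by
    calc ζ ^ p ≤ (1 + ‖x‖) ^ p := Real.rpow_le_rpow hζ0 hζle hp0.le
      _ ≤ 2 ^ p * ((1:ℝ) ^ p + ‖x‖ ^ p) := aux_add_rpow p hp0.le zero_le_one (norm_nonneg x)
      _ = 2 ^ p * (1 + ‖x‖ ^ p) := by rw [Real.one_rpow]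
  have hDq : D ^ q ≤ 7 ^ q * t ^ q := by
    calc D ^ q ≤ (7 * t) ^ q := Real.rpow_le_rpow hD0 hDt hq0.le
      _ = 7 ^ q * t ^ q := Real.mul_rpow (by norm_num) ht0
  have hne : p + q ≠ 0 := by positivity
  have hDpq : D ^ p * D ^ q ≤ 7 ^ (p * q) * t ^ (p * q) := by
    calc D ^ p * D ^ q = D ^ (p + q) := (Real.rpow_add' hD0 hne).symm
      _ = D ^ (p * q) := by rw [hpqsum]
      _ ≤ (7 * t) ^ (p * q) := Real.rpow_le_rpow hD0 hDt (by positivity)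
      _ = 7 ^ (p * q) * t ^ (p * q) := Real.mul_rpow (by norm_num) ht0
  set X := ‖x‖ ^ p with hX
  have hX0 : 0 ≤ X := Real.rpow_nonneg (norm_nonneg x) p
  set mx := max (t ^ q) (t ^ (p * q)) with hmx
  have hmx0 : 0 ≤ mx := le_max_of_le_left (Real.rpow_nonneg ht0 q)
  have htq : t ^ q ≤ mx := le_max_left _ _
  have htpq : t ^ (p * q) ≤ mx := le_max_right _ _
  have hζp0 : 0 ≤ ζ ^ p := Real.rpow_nonneg hζ0 p
  have hDq0 : 0 ≤ D ^ q := Real.rpow_nonneg hD0 q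
  have hDp0 : 0 ≤ D ^ p := Real.rpow_nonneg hD0 p
  have h7q0 : (0:ℝ) ≤ 7 ^ q := Real.rpow_nonneg (by norm_num) q
  have h7pq0 : (0:ℝ) ≤ 7 ^ (p * q) := Real.rpow_nonneg (by norm_num) (p * q)
  have h2p0 : (0:ℝ) ≤ 2 ^ p := Real.rpow_nonneg (by norm_num) p
  have hpq0 : (0:ℝ) ≤ p ^ q := Real.rpow_nonneg hp0.le q
  calc |ξ ^ p - ζ ^ p| ^ q ≤ (p * M ^ (p - 1) * D) ^ q := h2
    _ = p ^ q * M ^ p * D ^ q := h3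
    _ ≤ p ^ q * (2 ^ p * (ζ ^ p + D ^ p)) * D ^ q := by
        apply mul_le_mul_of_nonneg_right _ hDq0
        exact mul_le_mul_of_nonneg_left hMp hpq0
    _ = p ^ q * 2 ^ p * (ζ ^ p * D ^ q + D ^ p * D ^ q) := by ring
    _ ≤ p ^ q * 2 ^ p * ((2 ^ p * (1 + X)) * (7 ^ q * t ^ q) + 7 ^ (p * q) * t ^ (p * q)) := by
        apply mul_le_mul_of_nonneg_left _ (by positivity)
        apply add_le_add
        · exact mul_le_mul hζp hDq hDq0 (by positivity)
        · exact hDpq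
    _ ≤ p ^ q * 2 ^ p * ((2 ^ p * (1 + X)) * (7 ^ q * mx) + 7 ^ (p * q) * ((1 + X) * mx)) := by
        apply mul_le_mul_of_nonneg_left _ (by positivity)
        apply add_le_add
        · apply mul_le_mul_of_nonneg_left _ (by positivity)
          exact mul_le_mul_of_nonneg_left htq h7q0
        · apply mul_le_mul_of_nonneg_left _ h7pq0
          nlinarith
    _ = p ^ q * 2 ^ p * (2 ^ p * 7 ^ q + 7 ^ (p * q)) * ((1 + X) * mx) := by ring
    _ = p ^ q * 2 ^ p * (2 ^ p * 7 ^ q + 7 ^ (p * q)) * (1 + X) * mx := by ring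
end

section
/- Let p ∈ (1,∞), q = p/(p-1), and let F : V → [0,∞) on a real vector space V be given by F(v) = (l(v)[v])^{1/p}, where l(v)[w] is linear in w, positively (p−1)-homogeneous in v (l(λv) = λ^{p-1} l(v) for λ > 0), satisfies the Hölder bound l(v)[w] ≤ (l(w)[w])^{1/p}(l(v)[v])^{1/q} for all v, w, and l(v)[v] ≥ 0 with l(v)[v] = 0 iff v = 0. Then l is injective as a map from V to V*: if l(v) = l(w) as linear functionals, then v = w, provided the equality case of the Hölder bound implies w = Cv for some C ≥ 0. -/
/-!
Pairing the equal functionals `l v = l w` against `v` and against `w` turns the Hölder bound into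
`l w w ≤ (l w w)^(1/p) (l v v)^(1/q)` and its mirror image, which force `l v v = l w w`. Then
`l v w = l w w` is an equality case of the Hölder bound, so `w = C • v` with `C ≥ 0`, and
`(p - 1)`-homogeneity gives `l w w = C^(p-1) l w w`, whence `C = 1`.
-/

namespace Real.HolderConjugate

variable {p q a b : ℝ}

lemma rpow_one_div_mul_rpow_one_div (hpq : p.HolderConjugate q) (ha : 0 ≤ a) :
    a ^ (1 / p) * a ^ (1 / q) = a := by
  rw [← Real.rpow_add' ha (by rw [hpq.one_div_add_one_div]; norm_num), hpq.one_div_add_one_div,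
    div_one, Real.rpow_one]

lemma le_of_le_rpow_mul_rpow (hpq : p.HolderConjugate q) (ha : 0 ≤ a) (hb : 0 ≤ b)
    (h : b ≤ b ^ (1 / p) * a ^ (1 / q)) : b ≤ a := by
  rcases hb.eq_or_lt with rfl | hb
  · exact ha
  have hsplit : b ^ (1 / p) * b ^ (1 / q) ≤ b ^ (1 / p) * a ^ (1 / q) := by
    rwa [hpq.rpow_one_div_mul_rpow_one_div hb.le]
  have hroot : b ^ (1 / q) ≤ a ^ (1 / q) := le_of_mul_le_mul_left hsplit (by positivity)
  exact (Real.rpow_le_rpow_iff hb.le ha (one_div_pos.2 hpq.symm.pos)).1 hroot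

end Real.HolderConjugate

lemma diag_eq_of_pairing_eq {V : Type*} {p q : ℝ} (hpq : p.HolderConjugate q) {l : V → V → ℝ}
    (hholder : ∀ v w, l v w ≤ l w w ^ (1 / p) * l v v ^ (1 / q)) (hnn : ∀ v, 0 ≤ l v v)
    {v w : V} (hvw : ∀ u, l v u = l w u) : l v v = l w w := by
  refine le_antisymm (hpq.le_of_le_rpow_mul_rpow (hnn w) (hnn v) ?_)
    (hpq.le_of_le_rpow_mul_rpow (hnn v) (hnn w) ?_)
  · exact (hvw v).trans_le (hholder w v)
  · exact (hvw w).symm.trans_le (hholder v w)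

theorem finsler_pairing_injective_general {V : Type*} [AddCommGroup V] [Module ℝ V]
    (p q : ℝ) (hp : 1 < p) (hq : q = p / (p - 1))
    (l : V → V → ℝ)
    (hhom : ∀ c : ℝ, 0 < c → ∀ v w, l (c • v) w = c ^ (p - 1) * l v w)
    (hholder : ∀ v w, l v w ≤ l w w ^ (1 / p) * l v v ^ (1 / q))
    (hnn : ∀ v, 0 ≤ l v v)
    (hdef : ∀ v, l v v = 0 ↔ v = 0)
    (heqcase : ∀ v w, 0 < l v v → 0 < l w w →
      l v w = l w w ^ (1 / p) * l v v ^ (1 / q) → ∃ C : ℝ, 0 ≤ C ∧ w = C • v) :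
    ∀ v w, (∀ u, l v u = l w u) → v = w := by
  have hpq : p.HolderConjugate q := (Real.holderConjugate_iff_eq_conjExponent hp).2 hq
  intro v w hvw
  have hdiag : l v v = l w w := diag_eq_of_pairing_eq hpq hholder hnn hvw
  rcases (hnn w).eq_or_lt with hw | hw
  · rw [(hdef v).1 (hdiag.trans hw.symm), (hdef w).1 hw.symm]
  have hcross : l v w = l w w := hvw w
  obtain ⟨C, hC, rfl⟩ := heqcase v w (hdiag ▸ hw) hw
    (by rw [hcross, hdiag, hpq.rpow_one_div_mul_rpow_one_div hw.le])
  have hCpos : 0 < C := hC.lt_of_ne <| by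
    rintro rfl
    rw [zero_smul, (hdef 0).2 rfl] at hw
    exact lt_irrefl 0 hw
  have hCpow : C ^ (p - 1) = 1 := by
    have hscale := hhom C hCpos v (C • v)
    rw [hcross] at hscale
    exact (mul_eq_right₀ hw.ne').1 hscale.symm
  have hC1 : C = 1 := (Real.rpow_left_inj hC zero_le_one (sub_ne_zero.2 hp.ne')).1
    (by rw [hCpow, Real.one_rpow])
  rw [hC1, one_smul]

/-- Abstract injectivity of the Finsler pairing: if `l(v)[w]` is linear
in `w`, positively `(p−1)`-homogeneous in `v`, satisfies the Hölder bound
`l(v)[w] ≤ (l(w)[w])^{1/p} (l(v)[v])^{1/q}`, is nonnegative and definite on the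
diagonal, and the equality case of the Hölder bound forces proportionality with a
nonnegative constant, then `l` is injective: `l(v) = l(w)` implies `v = w`. -/
theorem finsler_pairing_injective {V : Type*} [AddCommGroup V] [Module ℝ V]
    (p q : ℝ) (hp : 1 < p) (hq : q = p / (p - 1))
    (l : V → V → ℝ)
    (hlin : ∀ v, IsLinearMap ℝ (l v))
    (hhom : ∀ c : ℝ, 0 < c → ∀ v w, l (c • v) w = c ^ (p - 1) * l v w)
    (hholder : ∀ v w, l v w ≤ l w w ^ (1 / p) * l v v ^ (1 / q))
    (hnn : ∀ v, 0 ≤ l v v)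
    (hdef : ∀ v, l v v = 0 ↔ v = 0)
    (heqcase : ∀ v w, 0 < l v v → 0 < l w w →
      l v w = l w w ^ (1 / p) * l v v ^ (1 / q) → ∃ C : ℝ, 0 ≤ C ∧ w = C • v) :
    ∀ v w, (∀ u, l v u = l w u) → v = w :=
  finsler_pairing_injective_general p q hp hq l hhom hholder hnn hdef heqcase
end
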